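/- arXiv:1510.05501 — 3 statements merged into one kernel-verified Lean document; each statement's English description precedes it below -/
import Mathlib

section
/- The function φ(x) = sin²(x²) / x⁴ satisfies, for all x > 0, the third-order linear homogeneous differential equation φ(x) = π_1(x) φ'(x) + π_2(x) φ''(x) + π_3(x) φ'''(x), where π_1(x) = −(16x⁴ + 15)/(64x³), π_2(x) = −9/(64x²), and π_3(x) = −1/(64x). Since π_1 ∈ A^(1) strictly, π_2 ∈ A^(−2) strictly, and π_3 ∈ A^(−1) strictly, with exponents r_1 = 1 ≤ 1, r_2 = −2 ≤ 2, r_3 = −1 ≤ 3, it follows that φ belongs to B^(3). -/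
open Filter Finset Real

noncomputable section

/-- `α` has the Poincaré-type asymptotic expansion `α(x) ~ Σ_{i≥0} c_i x^(γ-i)` as `x → ∞`,
which may be differentiated term by term any number of times: `α` is infinitely
differentiable on some `(a, ∞)` with `a > 0`, and for all `j N : ℕ`,
`α^{(j)}(x) − Σ_{i<N} c_i (γ−i)(γ−i−1)⋯(γ−i−j+1) x^(γ−i−j) = O(x^(γ−N−j))` as `x → ∞`. -/
def HasExpA (γ : ℝ) (c : ℕ → ℝ) (α : ℝ → ℝ) : Prop :=
  (∃ a : ℝ, 0 < a ∧ ∀ x ∈ Set.Ioi a, ContDiffAt ℝ (⊤ : ℕ∞) α x) ∧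
  ∀ j N : ℕ,
    (fun x : ℝ => iteratedDeriv j α x -
        ∑ i ∈ Finset.range N,
          c i * (∏ l ∈ Finset.range j, (γ - (i : ℝ) - (l : ℝ))) * x ^ (γ - (i : ℝ) - (j : ℝ)))
      =O[atTop] fun x : ℝ => x ^ (γ - (N : ℝ) - (j : ℝ))

/-- `α` belongs to the class `A^(γ)`. -/
def MemA (γ : ℝ) (α : ℝ → ℝ) : Prop := ∃ c : ℕ → ℝ, HasExpA γ c α

/-- `α` belongs to the class `A^(γ)` strictly (`c 0 ≠ 0`). -/
def MemAS (γ : ℝ) (α : ℝ → ℝ) : Prop := ∃ c : ℕ → ℝ, c 0 ≠ 0 ∧ HasExpA γ c α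

/-- `α` belongs to `X^(γ)` strictly: `α ∈ A^(γ)` strictly and every derivative `α^{(j)}`,
`j ≥ 1`, either vanishes identically for all large `x` or belongs to `A^(γ−j−k)` strictly
for some nonnegative integer `k`. -/
def MemXS (γ : ℝ) (α : ℝ → ℝ) : Prop :=
  MemAS γ α ∧
  ∀ j : ℕ, 1 ≤ j →
    (∀ᶠ x in atTop, iteratedDeriv j α x = 0) ∨
    ∃ k : ℕ, MemAS (γ - (j : ℝ) - (k : ℝ)) (iteratedDeriv j α)

/-- `f`, infinitely differentiable for all large `x`, belongs to the class `B^(m)`: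
`f(x) = Σ_{k=1}^m p_k(x) f^{(k)}(x)` for all large `x`, where for `1 ≤ k ≤ m−1` each `p_k`
either has an empty expansion (all its derivatives are `O(x^{−μ})` for every `μ > 0`) or
belongs to `A^(i_k)` strictly with `i_k ≤ k` an integer, and `p_m ∈ A^(i_m)` strictly with
`i_m ≤ m` an integer. -/
def MemB (m : ℕ) (f : ℝ → ℝ) : Prop :=
  (∀ᶠ x in atTop, ContDiffAt ℝ (⊤ : ℕ∞) f x) ∧
  ∃ p : ℕ → ℝ → ℝ,
    (∀ᶠ x in atTop, f x = ∑ k ∈ Finset.Icc 1 m, p k x * iteratedDeriv k f x) ∧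
    (∀ k ∈ Finset.Icc 1 (m - 1),
      ((∀ᶠ x in atTop, ContDiffAt ℝ (⊤ : ℕ∞) (p k) x) ∧
        ∀ μ : ℝ, 0 < μ → ∀ j : ℕ,
          (iteratedDeriv j (p k)) =O[atTop] fun x : ℝ => x ^ (-μ)) ∨
      ∃ i : ℤ, i ≤ (k : ℤ) ∧ MemAS (i : ℝ) (p k)) ∧
    ∃ i : ℤ, i ≤ (m : ℤ) ∧ MemAS (i : ℝ) (p m)

/-- The Bell polynomial `B_{n,k}(y_1, …, y_{n−k+1})`. -/
def bellPoly (n k : ℕ) (y : ℕ → ℝ) : ℝ :=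
  ∑ j ∈ Finset.univ.filter
      (fun j : Fin (n - k + 1) → Fin (n + 1) =>
        (∑ i, (j i : ℕ)) = k ∧ (∑ i, (i.1 + 1) * (j i : ℕ)) = n),
    ((n.factorial : ℝ) / ∏ i, ((j i : ℕ).factorial : ℝ)) *
      ∏ i, (y (i.1 + 1) / ((i.1 + 1).factorial : ℝ)) ^ (j i : ℕ)

namespace Aux17


lemma contDiffAt_zpow' (m : ℤ) {x : ℝ} (hx : x ≠ 0) :
    ContDiffAt ℝ (⊤ : ℕ∞) (fun x : ℝ => x ^ m) x := by
  rcases m with n | n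
  · simpa using ((contDiff_id.pow n : ContDiff ℝ (⊤ : ℕ∞) fun x : ℝ => x ^ n)).contDiffAt
  · have h : (fun x : ℝ => x ^ (Int.negSucc n)) = fun x : ℝ => (x ^ (n + 1))⁻¹ := by
      funext x; simp [zpow_negSucc]
    rw [h]
    exact ((contDiff_id.pow (n + 1)) : ContDiff ℝ (⊤ : ℕ∞) fun x : ℝ => x ^ (n + 1)).contDiffAt.inv
      (pow_ne_zero _ hx)

lemma iteratedDeriv_polysum (γ : ℤ) (M : ℕ) (c : ℕ → ℝ) (j : ℕ) :
    ∀ x : ℝ, x ≠ 0 →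
      iteratedDeriv j (fun x : ℝ => ∑ i ∈ Finset.range M, c i * x ^ (γ - (i : ℤ))) x
        = ∑ i ∈ Finset.range M,
            c i * (∏ l ∈ Finset.range j, ((γ : ℝ) - (i : ℝ) - (l : ℝ))) *
              x ^ (γ - (i : ℤ) - (j : ℤ)) := by
  induction j with
  | zero => intro x hx; simp
  | succ j ih =>
    intro x hx
    rw [iteratedDeriv_succ]
    have hev : iteratedDeriv j (fun x : ℝ => ∑ i ∈ Finset.range M, c i * x ^ (γ - (i : ℤ)))
        =ᶠ[nhds x] fun y : ℝ => ∑ i ∈ Finset.range M,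
            c i * (∏ l ∈ Finset.range j, ((γ : ℝ) - (i : ℝ) - (l : ℝ))) *
              y ^ (γ - (i : ℤ) - (j : ℤ)) := by
      filter_upwards [eventually_ne_nhds hx] with y hy using ih y hy
    rw [hev.deriv_eq, deriv_fun_sum (fun i _ =>
      (differentiableAt_zpow.2 (Or.inl hx)).const_mul _)]
    refine Finset.sum_congr rfl fun i _ => ?_
    rw [deriv_const_mul _ (differentiableAt_zpow.2 (Or.inl hx)), deriv_zpow,
      Finset.prod_range_succ]
    have he : γ - (i : ℤ) - (((j : ℕ) + 1 : ℕ) : ℤ) = γ - (i : ℤ) - (j : ℤ) - 1 := by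
      push_cast; ring
    rw [he]
    push_cast
    ring

lemma isBigO_zpow_zpow {e E : ℤ} (h : e ≤ E) :
    (fun x : ℝ => x ^ e) =O[atTop] fun x : ℝ => x ^ E := by
  refine Asymptotics.IsBigO.of_bound 1 ?_
  filter_upwards [eventually_ge_atTop (1 : ℝ)] with x hx
  have h0 : (0 : ℝ) < x := lt_of_lt_of_le one_pos hx
  rw [one_mul, Real.norm_eq_abs, Real.norm_eq_abs,
    abs_of_nonneg (zpow_nonneg h0.le _), abs_of_nonneg (zpow_nonneg h0.le _)]
  exact zpow_le_zpow_right₀ hx h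

lemma hasExpA_polysum (γ : ℤ) (M : ℕ) (c : ℕ → ℝ) (hc : ∀ i, M ≤ i → c i = 0) :
    HasExpA (γ : ℝ) c (fun x : ℝ => ∑ i ∈ Finset.range M, c i * x ^ (γ - (i : ℤ))) := by
  constructor
  · exact ⟨1, one_pos, fun x hx => ContDiffAt.sum fun i _ =>
      contDiffAt_const.mul (contDiffAt_zpow' _ (lt_trans one_pos hx).ne')⟩
  · intro j N
    have hEq : (fun x : ℝ =>
        iteratedDeriv j (fun x : ℝ => ∑ i ∈ Finset.range M, c i * x ^ (γ - (i : ℤ))) x -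
        ∑ i ∈ Finset.range N,
          c i * (∏ l ∈ Finset.range j, ((γ : ℝ) - (i : ℝ) - (l : ℝ))) *
            x ^ ((γ : ℝ) - (i : ℝ) - (j : ℝ)))
        =ᶠ[atTop] fun x : ℝ => ∑ i ∈ Finset.Ico N (max N M),
          c i * (∏ l ∈ Finset.range j, ((γ : ℝ) - (i : ℝ) - (l : ℝ))) *
            x ^ (γ - (i : ℤ) - (j : ℤ)) := by
      filter_upwards [eventually_gt_atTop (0 : ℝ)] with x hx
      rw [iteratedDeriv_polysum γ M c j x hx.ne']
      have h2 : ∑ i ∈ Finset.range N,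
          c i * (∏ l ∈ Finset.range j, ((γ : ℝ) - (i : ℝ) - (l : ℝ))) *
            x ^ ((γ : ℝ) - (i : ℝ) - (j : ℝ))
          = ∑ i ∈ Finset.range N,
          c i * (∏ l ∈ Finset.range j, ((γ : ℝ) - (i : ℝ) - (l : ℝ))) *
            x ^ (γ - (i : ℤ) - (j : ℤ)) := by
        refine Finset.sum_congr rfl fun i _ => ?_
        rw [show ((γ : ℝ) - (i : ℝ) - (j : ℝ)) = ((γ - (i : ℤ) - (j : ℤ) : ℤ) : ℝ) by
          push_cast; ring, Real.rpow_intCast]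
      have h1 : ∑ i ∈ Finset.range M,
          c i * (∏ l ∈ Finset.range j, ((γ : ℝ) - (i : ℝ) - (l : ℝ))) *
            x ^ (γ - (i : ℤ) - (j : ℤ))
          = ∑ i ∈ Finset.range (max N M),
          c i * (∏ l ∈ Finset.range j, ((γ : ℝ) - (i : ℝ) - (l : ℝ))) *
            x ^ (γ - (i : ℤ) - (j : ℤ)) := by
        refine Finset.sum_subset (Finset.range_subset_range.2 (le_max_right N M)) fun i _ hi => ?_
        rw [hc i (by simpa using hi), zero_mul, zero_mul]
      rw [h2, h1, Finset.sum_Ico_eq_sub _ (le_max_left N M)]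
    refine hEq.trans_isBigO ?_
    have hR : (fun x : ℝ => x ^ ((γ : ℝ) - (N : ℝ) - (j : ℝ)))
        = fun x : ℝ => x ^ (γ - (N : ℤ) - (j : ℤ)) := by
      funext x
      rw [show ((γ : ℝ) - (N : ℝ) - (j : ℝ)) = ((γ - (N : ℤ) - (j : ℤ) : ℤ) : ℝ) by
        push_cast; ring, Real.rpow_intCast]
    rw [hR]
    refine Asymptotics.IsBigO.fun_sum fun i hi => ?_
    have hNi : (N : ℤ) ≤ (i : ℤ) := by exact_mod_cast (Finset.mem_Ico.1 hi).1
    exact (isBigO_zpow_zpow (by omega)).const_mul_left _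


def c1 : ℕ → ℝ := fun i => if i = 0 then -1/4 else if i = 4 then -15/64 else 0

lemma memAS_pi1 : MemAS 1 (fun x : ℝ => -(16 * x ^ 4 + 15) / (64 * x ^ 3)) := by
  have hfun : (fun x : ℝ => -(16 * x ^ 4 + 15) / (64 * x ^ 3))
      = fun x : ℝ => ∑ i ∈ Finset.range 5, c1 i * x ^ ((1 : ℤ) - (i : ℤ)) := by
    funext x
    rcases eq_or_ne x 0 with rfl | hx
    · norm_num [Finset.sum_range_succ, c1, zero_zpow]
    · simp only [Finset.sum_range_succ, c1]
      norm_num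
      field_simp
      ring
  refine ⟨c1, by norm_num [c1], ?_⟩
  rw [hfun, show (1 : ℝ) = ((1 : ℤ) : ℝ) by norm_num]
  exact hasExpA_polysum 1 5 c1 (fun i hi => by
    simp only [c1]; rw [if_neg (by omega), if_neg (by omega)])

def c2 : ℕ → ℝ := fun i => if i = 0 then -9/64 else 0

lemma memAS_pi2 : MemAS (-2) (fun x : ℝ => -9 / (64 * x ^ 2)) := by
  have hfun : (fun x : ℝ => -9 / (64 * x ^ 2))
      = fun x : ℝ => ∑ i ∈ Finset.range 1, c2 i * x ^ ((-2 : ℤ) - (i : ℤ)) := by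
    funext x
    rcases eq_or_ne x 0 with rfl | hx
    · norm_num [c2, zero_zpow]
    · simp only [Finset.sum_range_succ, Finset.sum_range_zero, c2]
      norm_num
      field_simp
  refine ⟨c2, by norm_num [c2], ?_⟩
  rw [hfun, show (-2 : ℝ) = ((-2 : ℤ) : ℝ) by norm_num]
  exact hasExpA_polysum (-2) 1 c2 (fun i hi => by
    simp only [c2]; rw [if_neg (by omega)])

def c3 : ℕ → ℝ := fun i => if i = 0 then -1/64 else 0

lemma memAS_pi3 : MemAS (-1) (fun x : ℝ => -1 / (64 * x)) := by
  have hfun : (fun x : ℝ => -1 / (64 * x))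
      = fun x : ℝ => ∑ i ∈ Finset.range 1, c3 i * x ^ ((-1 : ℤ) - (i : ℤ)) := by
    funext x
    rcases eq_or_ne x 0 with rfl | hx
    · norm_num [c3, zero_zpow]
    · simp only [Finset.sum_range_succ, Finset.sum_range_zero, c3]
      norm_num
      field_simp
  refine ⟨c3, by norm_num [c3], ?_⟩
  rw [hfun, show (-1 : ℝ) = ((-1 : ℤ) : ℝ) by norm_num]
  exact hasExpA_polysum (-1) 1 c3 (fun i hi => by
    simp only [c3]; rw [if_neg (by omega)])


def phi : ℝ → ℝ := fun t : ℝ => Real.sin (t ^ 2) ^ 2 / t ^ 4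

def g1 : ℝ → ℝ := fun t : ℝ =>
  (4 * t ^ 2 * Real.sin (t ^ 2) * Real.cos (t ^ 2) - 4 * Real.sin (t ^ 2) ^ 2) / t ^ 5

def g2 : ℝ → ℝ := fun t : ℝ =>
  (20 * Real.sin (t ^ 2) ^ 2 - 8 * t ^ 4 * Real.sin (t ^ 2) ^ 2
    - 28 * t ^ 2 * Real.sin (t ^ 2) * Real.cos (t ^ 2) + 8 * t ^ 4 * Real.cos (t ^ 2) ^ 2) / t ^ 6

def g3 : ℝ → ℝ := fun t : ℝ =>
  (-120 * Real.sin (t ^ 2) ^ 2 + 72 * t ^ 4 * Real.sin (t ^ 2) ^ 2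
    + 192 * t ^ 2 * Real.sin (t ^ 2) * Real.cos (t ^ 2)
    - 64 * t ^ 6 * Real.sin (t ^ 2) * Real.cos (t ^ 2)
    - 72 * t ^ 4 * Real.cos (t ^ 2) ^ 2) / t ^ 7

section deriv
variable {x : ℝ}

lemma hsq : HasDerivAt (fun t : ℝ => t ^ 2) (2 * x ^ 1) x := hasDerivAt_pow 2 x

lemma hs : HasDerivAt (fun t : ℝ => Real.sin (t ^ 2)) (Real.cos (x ^ 2) * (2 * x ^ 1)) x :=
  (Real.hasDerivAt_sin _).comp x hsq

lemma hc : HasDerivAt (fun t : ℝ => Real.cos (t ^ 2)) (-Real.sin (x ^ 2) * (2 * x ^ 1)) x :=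
  (Real.hasDerivAt_cos _).comp x hsq

lemma hd1 (hx : x ≠ 0) : HasDerivAt phi (g1 x) x := by
  have h := ((hs (x := x)).fun_pow 2).fun_div (hasDerivAt_pow 4 x) (pow_ne_zero 4 hx)
  refine h.congr_deriv ?_
  simp only [g1]
  field_simp
  ring

lemma hd2 (hx : x ≠ 0) : HasDerivAt g1 (g2 x) x := by
  have hnum : HasDerivAt
      (fun t : ℝ => 4 * t ^ 2 * Real.sin (t ^ 2) * Real.cos (t ^ 2) - 4 * Real.sin (t ^ 2) ^ 2)
      ((((4 : ℝ) * (2 * x ^ 1)) * Real.sin (x ^ 2) + 4 * x ^ 2 * (Real.cos (x ^ 2) * (2 * x ^ 1)))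
          * Real.cos (x ^ 2)
        + (4 * x ^ 2 * Real.sin (x ^ 2)) * (-Real.sin (x ^ 2) * (2 * x ^ 1))
        - 4 * ((2 : ℝ) * Real.sin (x ^ 2) ^ 1 * (Real.cos (x ^ 2) * (2 * x ^ 1)))) x := by
    exact ((((hasDerivAt_pow 2 x).const_mul 4).mul hs).mul hc).sub (((hs).pow 2).const_mul 4)
  have h := hnum.fun_div (hasDerivAt_pow 5 x) (pow_ne_zero 5 hx)
  refine h.congr_deriv ?_
  simp only [g2]
  field_simp
  ring

lemma hd3 (hx : x ≠ 0) : HasDerivAt g2 (g3 x) x := by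
  have hnum := ((((hs (x := x)).fun_pow 2).const_mul 20).fun_sub
      (((hasDerivAt_pow 4 x).const_mul 8).fun_mul ((hs).fun_pow 2))).fun_sub
      ((((hasDerivAt_pow 2 x).const_mul 28).fun_mul hs).fun_mul hc) |>.fun_add
      (((hasDerivAt_pow 4 x).const_mul 8).fun_mul ((hc).fun_pow 2))
  have h := hnum.fun_div (hasDerivAt_pow 6 x) (pow_ne_zero 6 hx)
  refine h.congr_deriv ?_
  simp only [g3]
  field_simp
  ring

end deriv

lemma id1 {x : ℝ} (hx : x ≠ 0) : iteratedDeriv 1 phi x = g1 x := by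
  rw [iteratedDeriv_one]; exact (hd1 hx).deriv

lemma id2 {x : ℝ} (hx : x ≠ 0) : iteratedDeriv 2 phi x = g2 x := by
  rw [iteratedDeriv_succ]
  have hev : iteratedDeriv 1 phi =ᶠ[nhds x] g1 := by
    filter_upwards [eventually_ne_nhds hx] with y hy using id1 hy
  rw [hev.deriv_eq]; exact (hd2 hx).deriv

lemma id3 {x : ℝ} (hx : x ≠ 0) : iteratedDeriv 3 phi x = g3 x := by
  rw [iteratedDeriv_succ]
  have hev : iteratedDeriv 2 phi =ᶠ[nhds x] g2 := by
    filter_upwards [eventually_ne_nhds hx] with y hy using id2 hy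
  rw [hev.deriv_eq]; exact (hd3 hx).deriv

lemma ode {x : ℝ} (hx : 0 < x) :
    Real.sin (x ^ 2) ^ 2 / x ^ 4 =
      (-(16 * x ^ 4 + 15) / (64 * x ^ 3)) * iteratedDeriv 1 (fun t : ℝ => Real.sin (t ^ 2) ^ 2 / t ^ 4) x +
        (-9 / (64 * x ^ 2)) * iteratedDeriv 2 (fun t : ℝ => Real.sin (t ^ 2) ^ 2 / t ^ 4) x +
        (-1 / (64 * x)) * iteratedDeriv 3 (fun t : ℝ => Real.sin (t ^ 2) ^ 2 / t ^ 4) x := by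
  show Real.sin (x ^ 2) ^ 2 / x ^ 4 =
      (-(16 * x ^ 4 + 15) / (64 * x ^ 3)) * iteratedDeriv 1 phi x +
        (-9 / (64 * x ^ 2)) * iteratedDeriv 2 phi x +
        (-1 / (64 * x)) * iteratedDeriv 3 phi x
  rw [id1 hx.ne', id2 hx.ne', id3 hx.ne']
  simp only [g1, g2, g3]
  have hxne : x ≠ 0 := hx.ne'
  field_simp
  ring


end Aux17

/-- `φ(x) = sin²(x²)/x⁴` satisfies, for all `x > 0`,
`φ = π₁ φ' + π₂ φ'' + π₃ φ'''` with `π₁(x) = −(16x⁴+15)/(64x³)`, `π₂(x) = −9/(64x²)`,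
`π₃(x) = −1/(64x)`; `π₁ ∈ A^(1)` strictly, `π₂ ∈ A^(−2)` strictly, `π₃ ∈ A^(−1)` strictly,
and consequently `φ ∈ B^(3)`. -/


theorem sin_sq_sq_over_fourth_memB_three :
    (∀ x : ℝ, 0 < x →
      Real.sin (x ^ 2) ^ 2 / x ^ 4 =
        (-(16 * x ^ 4 + 15) / (64 * x ^ 3)) *
            iteratedDeriv 1 (fun t : ℝ => Real.sin (t ^ 2) ^ 2 / t ^ 4) x +
          (-9 / (64 * x ^ 2)) *
            iteratedDeriv 2 (fun t : ℝ => Real.sin (t ^ 2) ^ 2 / t ^ 4) x +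
          (-1 / (64 * x)) *
            iteratedDeriv 3 (fun t : ℝ => Real.sin (t ^ 2) ^ 2 / t ^ 4) x) ∧
    MemAS 1 (fun x : ℝ => -(16 * x ^ 4 + 15) / (64 * x ^ 3)) ∧
    MemAS (-2) (fun x : ℝ => -9 / (64 * x ^ 2)) ∧
    MemAS (-1) (fun x : ℝ => -1 / (64 * x)) ∧
    MemB 3 (fun x : ℝ => Real.sin (x ^ 2) ^ 2 / x ^ 4) := by
  refine ⟨fun x hx => Aux17.ode hx, Aux17.memAS_pi1, Aux17.memAS_pi2, Aux17.memAS_pi3, ?_, ?_⟩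
  · filter_upwards [eventually_gt_atTop (0 : ℝ)] with x hx
    exact (((Real.contDiff_sin.comp (contDiff_id.pow 2)).pow 2).contDiffAt).div
      ((contDiff_id.pow 4)).contDiffAt (pow_ne_zero 4 hx.ne')
  · refine ⟨fun k => if k = 1 then (fun x : ℝ => -(16 * x ^ 4 + 15) / (64 * x ^ 3))
      else if k = 2 then (fun x : ℝ => -9 / (64 * x ^ 2))
      else (fun x : ℝ => -1 / (64 * x)), ?_, ?_, ?_⟩
    · filter_upwards [eventually_gt_atTop (0 : ℝ)] with x hx
      rw [show (Finset.Icc 1 3 : Finset ℕ) = {1, 2, 3} from rfl,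
        Finset.sum_insert (by decide), Finset.sum_insert (by decide), Finset.sum_singleton]
      rw [if_pos rfl, if_neg (by norm_num : ¬(2 : ℕ) = 1), if_pos rfl,
        if_neg (by norm_num : ¬(3 : ℕ) = 1), if_neg (by norm_num : ¬(3 : ℕ) = 2)]
      rw [Aux17.ode hx]
      ring
    · intro k hk
      fin_cases hk
      · exact Or.inr ⟨1, by norm_num, by
          rw [show (((1 : ℤ) : ℝ)) = 1 from Int.cast_one]; exact Aux17.memAS_pi1⟩
      · exact Or.inr ⟨-2, by norm_num, by
          rw [show (((-2 : ℤ) : ℝ)) = -2 by norm_num]; exact Aux17.memAS_pi2⟩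
    · exact ⟨-1, by norm_num, by
        rw [show (((-1 : ℤ) : ℝ)) = -1 by norm_num]; exact Aux17.memAS_pi3⟩
end
end

section
/- The function f(x) = 1/(√x + 1)³ (for x > 0) does not belong to B^(1). More precisely, the quotient f(x)/f'(x) equals −(2/3)(x + √x) for all x > 0, and the function x ↦ −(2/3)(x + √x) does not belong to A^(γ) for any real γ. -/
open Filter Finset Real

noncomputable section

lemma aux_rpow_tendsto_zero {a : ℝ} (ha : a < 0) :
    Tendsto (fun x : ℝ => x ^ a) atTop (nhds 0) := by
  have := tendsto_rpow_neg_atTop (neg_pos.mpr ha)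
  simpa using this

lemma aux_exp_eq_zero {a L : ℝ} (hL : L ≠ 0)
    (h : Tendsto (fun x : ℝ => x ^ a) atTop (nhds L)) : a = 0 := by
  rcases lt_trichotomy a 0 with ha | ha | ha
  · exact absurd (tendsto_nhds_unique h (aux_rpow_tendsto_zero ha)) hL
  · exact ha
  · exact absurd h (not_tendsto_nhds_of_tendsto_atTop (tendsto_rpow_atTop ha) L)

lemma aux_ratio_exp {h : ℝ → ℝ} {β δ L M : ℝ} (hL : L ≠ 0) (hM : M ≠ 0)
    (h1 : Tendsto (fun x => h x / x ^ β) atTop (nhds L))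
    (h2 : Tendsto (fun x => h x / x ^ δ) atTop (nhds M)) : β = δ := by
  have hdiv := h2.div h1 hL
  have hne : ∀ᶠ x : ℝ in atTop, h x ≠ 0 := by
    filter_upwards [h1.eventually_ne hL] with x hx
    intro h0; exact hx (by simp [h0])
  have hev : (fun x : ℝ => (h x / x ^ δ) / (h x / x ^ β)) =ᶠ[atTop]
      fun x : ℝ => x ^ (β - δ) := by
    filter_upwards [hne, eventually_gt_atTop (0:ℝ)] with x hx hx0
    rw [Real.rpow_sub hx0]
    have hb := (Real.rpow_pos_of_pos hx0 β).ne'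
    have hd := (Real.rpow_pos_of_pos hx0 δ).ne'
    field_simp
  have := hdiv.congr' hev
  have h0 : (M / L : ℝ) ≠ 0 := div_ne_zero hM hL
  linarith [aux_exp_eq_zero h0 this]

lemma aux_isBigO_div_rpow {f : ℝ → ℝ} {s t : ℝ}
    (hf : f =O[atTop] fun x : ℝ => x ^ s) :
    (fun x => f x / x ^ t) =O[atTop] fun x : ℝ => x ^ (s - t) := by
  have h2 : (fun x : ℝ => (x ^ t)⁻¹) =O[atTop] fun x : ℝ => (x ^ t)⁻¹ :=
    Asymptotics.isBigO_refl _ _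
  refine (hf.mul h2).congr' (by simp [div_eq_mul_inv]) ?_
  filter_upwards [eventually_gt_atTop (0:ℝ)] with x hx
  rw [Real.rpow_sub hx, div_eq_mul_inv]

lemma aux_extract {β : ℝ} {e : ℕ → ℝ} {h : ℝ → ℝ}
    (H : ∀ N : ℕ, (fun x : ℝ => h x - ∑ i ∈ Finset.range N, e i * x ^ (β - (i:ℝ)))
      =O[atTop] fun x : ℝ => x ^ (β - (N:ℝ))) :
    (∀ i, e i = 0) ∨ ∃ i0 : ℕ, e i0 ≠ 0 ∧
      Tendsto (fun x => h x / x ^ (β - (i0:ℝ))) atTop (nhds (e i0)) := by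
  by_cases hall : ∀ i, e i = 0
  · exact Or.inl hall
  push_neg at hall
  set i0 := Nat.find hall with hi0
  have hne : e i0 ≠ 0 := Nat.find_spec hall
  have hmin : ∀ i < i0, e i = 0 := fun i hi => not_not.mp (Nat.find_min hall hi)
  refine Or.inr ⟨i0, hne, ?_⟩
  have hsum : ∀ x : ℝ, ∑ i ∈ Finset.range (i0+1), e i * x ^ (β - (i:ℝ))
      = e i0 * x ^ (β - (i0:ℝ)) := by
    intro x
    rw [Finset.sum_eq_single_of_mem i0 (Finset.self_mem_range_succ i0)]
    intro i hi hne'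
    have : i < i0 := lt_of_le_of_ne (Nat.lt_succ_iff.mp (Finset.mem_range.mp hi)) hne'
    simp [hmin i this]
  have O1 : (fun x : ℝ => h x - e i0 * x ^ (β - (i0:ℝ)))
      =O[atTop] fun x : ℝ => x ^ (β - (i0:ℝ) - 1) := by
    have := H (i0+1)
    refine this.congr' (by filter_upwards with x; rw [hsum]) ?_
    filter_upwards with x
    push_cast
    ring_nf
  have O2 := aux_isBigO_div_rpow (t := β - (i0:ℝ)) O1
  have O3 : (fun x : ℝ => h x / x ^ (β - (i0:ℝ)) - e i0)
      =O[atTop] fun x : ℝ => x ^ (-1 : ℝ) := by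
    refine O2.congr' ?_ ?_
    · filter_upwards [eventually_gt_atTop (0:ℝ)] with x hx
      have hb := (Real.rpow_pos_of_pos hx (β - (i0:ℝ))).ne'
      field_simp
    · filter_upwards with x
      norm_num
  have := (O3.trans_tendsto (aux_rpow_tendsto_zero (by norm_num))).add_const (e i0)
  simpa using this

lemma aux_hasExpA_congr {γ : ℝ} {c : ℕ → ℝ} {g₁ g₂ : ℝ → ℝ} (hev : g₁ =ᶠ[atTop] g₂)
    (H : HasExpA γ c g₁) : HasExpA γ c g₂ := by
  obtain ⟨b, hb⟩ := eventually_atTop.mp hev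
  have hnb : ∀ x : ℝ, b < x → g₁ =ᶠ[nhds x] g₂ := fun x hx =>
    eventually_nhds_iff.mpr ⟨Set.Ioi b, fun y hy => hb y hy.le, isOpen_Ioi, hx⟩
  obtain ⟨⟨a, ha, hsm⟩, hbo⟩ := H
  constructor
  · refine ⟨max a (b+1), lt_max_of_lt_left ha, fun x hx => ?_⟩
    have hxa : a < x := lt_of_le_of_lt (le_max_left _ _) hx
    have hxb : b < x := by
      have := lt_of_le_of_lt (le_max_right a (b+1)) hx
      linarith
    exact (hsm x hxa).congr_of_eventuallyEq (hnb x hxb).symm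
  · intro j N
    refine (hbo j N).congr' ?_ EventuallyEq.rfl
    filter_upwards [eventually_gt_atTop b] with x hx
    rw [(hnb x hx).iteratedDeriv_eq j]

lemma aux_tendsto_inv_sqrt : Tendsto (fun x : ℝ => (Real.sqrt x)⁻¹) atTop (nhds 0) := by
  refine (aux_rpow_tendsto_zero (by norm_num : (-(1:ℝ)/2) < 0)).congr' ?_
  filter_upwards [eventually_gt_atTop (0:ℝ)] with x hx
  rw [Real.sqrt_eq_rpow, ← Real.rpow_neg hx.le]
  norm_num

lemma aux_hasDerivAt_g {x : ℝ} (hx : 0 < x) :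
    HasDerivAt (fun x : ℝ => -(2/3) * (x + Real.sqrt x))
      (-(2/3) - 1/(3 * Real.sqrt x)) x := by
  have h : HasDerivAt (fun x : ℝ => x + Real.sqrt x) (1 + 1/(2 * Real.sqrt x)) x :=
    (hasDerivAt_id x).add (Real.hasDerivAt_sqrt hx.ne')
  have := h.const_mul (-(2/3) : ℝ)
  refine this.congr_deriv ?_
  have h1 : Real.sqrt x ≠ 0 := (Real.sqrt_pos.mpr hx).ne'
  field_simp
  ring

lemma aux_deriv_g_eq {x : ℝ} (hx : 0 < x) :
    deriv (fun x : ℝ => -(2/3) * (x + Real.sqrt x)) x = -(2/3) - 1/(3 * Real.sqrt x) :=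
  (aux_hasDerivAt_g hx).deriv

lemma aux_hasDerivAt_g1 {x : ℝ} (hx : 0 < x) :
    HasDerivAt (fun x : ℝ => -(2/3) - 1/(3 * Real.sqrt x)) ((1/6) * x ^ (-(3:ℝ)/2)) x := by
  have h1 : (0:ℝ) < Real.sqrt x := Real.sqrt_pos.mpr hx
  have h : HasDerivAt (fun x : ℝ => (Real.sqrt x)⁻¹)
      (-(1/(2 * Real.sqrt x)) / (Real.sqrt x) ^ 2) x :=
    (Real.hasDerivAt_sqrt hx.ne').inv h1.ne'
  have h2 := (h.const_mul (1/3 : ℝ)).const_sub (-(2/3) : ℝ)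
  have hfun : (fun x : ℝ => -(2/3) - 1/(3 * Real.sqrt x))
      = (fun y : ℝ => -(2/3) - 1/3 * (Real.sqrt y)⁻¹) := by
    funext y; rw [one_div, mul_inv]; ring
  rw [hfun]
  refine h2.congr_deriv ?_
  have hsq : Real.sqrt x ^ 2 = x := Real.sq_sqrt hx.le
  have hrw : x ^ (-(3:ℝ)/2) = (x * Real.sqrt x)⁻¹ := by
    rw [show (-(3:ℝ)/2) = -(1 + 1/2) by norm_num, Real.rpow_neg hx.le,
      Real.rpow_add hx, Real.rpow_one, ← Real.sqrt_eq_rpow]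
  rw [hrw]
  have h3 : x * Real.sqrt x ≠ 0 := by positivity
  field_simp
  nlinarith [hsq, h1]

lemma aux_iteratedDeriv_two_g : ∀ᶠ x : ℝ in atTop,
    iteratedDeriv 2 (fun x : ℝ => -(2/3) * (x + Real.sqrt x)) x = (1/6) * x ^ (-(3:ℝ)/2) := by
  filter_upwards [eventually_gt_atTop (0:ℝ)] with x hx
  rw [iteratedDeriv_succ, iteratedDeriv_one]
  have hev : deriv (fun x : ℝ => -(2/3) * (x + Real.sqrt x)) =ᶠ[nhds x]
      (fun x : ℝ => -(2/3) - 1/(3 * Real.sqrt x)) :=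
    eventually_nhds_iff.mpr ⟨Set.Ioi 0, fun y hy => aux_deriv_g_eq hy, isOpen_Ioi, hx⟩
  rw [hev.deriv_eq, (aux_hasDerivAt_g1 hx).deriv]

lemma aux_tendsto_g_div :
    Tendsto (fun x : ℝ => (-(2/3) * (x + Real.sqrt x)) / x ^ (1:ℝ))
      atTop (nhds (-(2/3))) := by
  have h1 : Tendsto (fun x : ℝ => -(2/3) * (1 + (Real.sqrt x)⁻¹)) atTop (nhds (-(2/3))) := by
    have := ((tendsto_const_nhds (x := (1:ℝ)) (f := atTop)).add aux_tendsto_inv_sqrt).const_mul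
      (-(2/3) : ℝ)
    simpa using this
  refine h1.congr' ?_
  filter_upwards [eventually_gt_atTop (0:ℝ)] with x hx
  have h1' : Real.sqrt x ≠ 0 := (Real.sqrt_pos.mpr hx).ne'
  have hsq : Real.sqrt x * Real.sqrt x = x := Real.mul_self_sqrt hx.le
  rw [Real.rpow_one]
  field_simp
  nlinarith [hsq]

lemma aux_part2 (γ : ℝ) : ¬ MemA γ (fun x : ℝ => -(2/3) * (x + Real.sqrt x)) := by
  rintro ⟨c, _, hbo⟩
  set g : ℝ → ℝ := fun x => -(2/3) * (x + Real.sqrt x) with hg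
  -- the j = 0 expansion
  have H0 : ∀ N : ℕ, (fun x : ℝ => g x - ∑ i ∈ Finset.range N, c i * x ^ (γ - (i:ℝ)))
      =O[atTop] fun x : ℝ => x ^ (γ - (N:ℝ)) := by
    intro N
    have := hbo 0 N
    simpa using this
  have hgx1 : Tendsto (fun x : ℝ => g x / x ^ (1:ℝ)) atTop (nhds (-(2/3))) :=
    aux_tendsto_g_div
  rcases aux_extract H0 with hall | ⟨i0, hne0, hlim0⟩
  · -- all coefficients vanish: g = O(x^(γ-N)) for every N, contradicting g/x → -2/3
    obtain ⟨N, hN⟩ := exists_nat_gt γ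
    have hO : g =O[atTop] fun x : ℝ => x ^ (γ - (N:ℝ)) := by
      refine (H0 N).congr' ?_ EventuallyEq.rfl
      filter_upwards with x
      simp [hall]
    have hO1 := aux_isBigO_div_rpow (t := (1:ℝ)) hO
    have h0 : Tendsto (fun x : ℝ => g x / x ^ (1:ℝ)) atTop (nhds 0) :=
      hO1.trans_tendsto (aux_rpow_tendsto_zero (by linarith))
    have := tendsto_nhds_unique hgx1 h0
    norm_num at this
  -- first nonzero coefficient forces γ = i0 + 1
  have hγ : γ - (i0:ℝ) = 1 :=
    aux_ratio_exp hne0 (show (-(2/3) : ℝ) ≠ 0 by norm_num) hlim0 hgx1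
  -- the j = 2 expansion
  have H2 : ∀ N : ℕ, (fun x : ℝ => iteratedDeriv 2 g x -
      ∑ i ∈ Finset.range N, (c i * ((γ - (i:ℝ)) * (γ - (i:ℝ) - 1))) * x ^ ((γ - 2) - (i:ℝ)))
      =O[atTop] fun x : ℝ => x ^ ((γ - 2) - (N:ℝ)) := by
    intro N
    refine (hbo 2 N).congr' ?_ ?_
    · filter_upwards with x
      congr 1
      refine Finset.sum_congr rfl fun i _ => ?_
      rw [show γ - (i:ℝ) - ((2:ℕ):ℝ) = γ - 2 - (i:ℝ) by push_cast; ring]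
      congr 1
      rw [Finset.prod_range_succ, Finset.prod_range_one]
      push_cast
      ring
    · filter_upwards with x
      rw [show γ - (N:ℝ) - ((2:ℕ):ℝ) = γ - 2 - (N:ℝ) by push_cast; ring]
  have hT : Tendsto (fun x : ℝ => iteratedDeriv 2 g x / x ^ (-(3:ℝ)/2))
      atTop (nhds (1/6)) := by
    refine (tendsto_const_nhds (x := (1/6 : ℝ)) (f := atTop)).congr' ?_
    filter_upwards [aux_iteratedDeriv_two_g, eventually_gt_atTop (0:ℝ)] with x h2x hx
    rw [h2x, mul_div_assoc, div_self (Real.rpow_pos_of_pos hx _).ne', mul_one]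
  rcases aux_extract H2 with hall2 | ⟨i2, hne2, hlim2⟩
  · -- all coefficients vanish: iteratedDeriv 2 g = O(x^(γ-2-N)) for every N
    obtain ⟨N, hN⟩ := exists_nat_gt (γ - 1/2)
    have hO : (iteratedDeriv 2 g) =O[atTop] fun x : ℝ => x ^ ((γ - 2) - (N:ℝ)) := by
      refine (H2 N).congr' ?_ EventuallyEq.rfl
      filter_upwards with x
      simp [hall2]
    have hO1 := aux_isBigO_div_rpow (t := (-(3:ℝ)/2)) hO
    have h0 : Tendsto (fun x : ℝ => iteratedDeriv 2 g x / x ^ (-(3:ℝ)/2)) atTop (nhds 0) :=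
      hO1.trans_tendsto (aux_rpow_tendsto_zero (by linarith))
    have := tendsto_nhds_unique hT h0
    norm_num at this
  · have hγ2 : (γ - 2) - (i2:ℝ) = -(3:ℝ)/2 :=
      aux_ratio_exp hne2 (by norm_num : (1/6 : ℝ) ≠ 0) hlim2 hT
    have hnat : (2*i0 + 2 : ℝ) = (2*i2 + 1 : ℝ) := by
      push_cast
      linarith
    have : (2*i0 + 2 : ℕ) = (2*i2 + 1 : ℕ) := by exact_mod_cast hnat
    omega


lemma aux_hasDerivAt_f {x : ℝ} (hx : 0 < x) :
    HasDerivAt (fun t : ℝ => 1 / (Real.sqrt t + 1) ^ 3)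
      (-((3 * (Real.sqrt x + 1) ^ 2) * (1 / (2 * Real.sqrt x))) / ((Real.sqrt x + 1) ^ 3) ^ 2) x := by
  have hs : HasDerivAt (fun t : ℝ => Real.sqrt t + 1) (1 / (2 * Real.sqrt x)) x :=
    (Real.hasDerivAt_sqrt hx.ne').add_const 1
  have hp : HasDerivAt (fun t : ℝ => (Real.sqrt t + 1) ^ 3)
      (3 * (Real.sqrt x + 1) ^ 2 * (1 / (2 * Real.sqrt x))) x := by
    simpa using hs.fun_pow 3
  have hne : (Real.sqrt x + 1) ^ 3 ≠ 0 := by positivity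
  simpa [one_div] using hp.fun_inv hne

lemma aux_deriv_f_ne {x : ℝ} (hx : 0 < x) :
    deriv (fun t : ℝ => 1 / (Real.sqrt t + 1) ^ 3) x ≠ 0 := by
  rw [(aux_hasDerivAt_f hx).deriv]
  have h1 : (0:ℝ) < Real.sqrt x := Real.sqrt_pos.mpr hx
  have h2 : (0:ℝ) < (3 * (Real.sqrt x + 1) ^ 2) * (1 / (2 * Real.sqrt x)) := by positivity
  have h3 : (0:ℝ) < ((Real.sqrt x + 1) ^ 3) ^ 2 := by positivity
  intro h
  rw [div_eq_zero_iff] at h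
  rcases h with h | h
  · linarith
  · linarith

lemma aux_part1 (x : ℝ) (hx : 0 < x) :
    (1 / (Real.sqrt x + 1) ^ 3) /
        deriv (fun t : ℝ => 1 / (Real.sqrt t + 1) ^ 3) x =
      -(2 / 3) * (x + Real.sqrt x) := by
  rw [(aux_hasDerivAt_f hx).deriv]
  have h1 : (0:ℝ) < Real.sqrt x := Real.sqrt_pos.mpr hx
  have h2 : Real.sqrt x + 1 ≠ 0 := by positivity
  set s := Real.sqrt x with hs
  have hx' : x = s * s := (Real.mul_self_sqrt hx.le).symm
  rw [hx']
  field_simp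

/-- `f(x) = 1/(√x+1)³` does not belong to `B^(1)`: its logarithmic-derivative
quotient `f/f'` equals `−(2/3)(x + √x)` for all `x > 0`, a function which lies in no class
`A^(γ)`. -/
theorem not_memB_one :
    (∀ x : ℝ, 0 < x →
      (1 / (Real.sqrt x + 1) ^ 3) /
          deriv (fun t : ℝ => 1 / (Real.sqrt t + 1) ^ 3) x =
        -(2 / 3) * (x + Real.sqrt x)) ∧
    (∀ γ : ℝ, ¬ MemA γ (fun x : ℝ => -(2 / 3) * (x + Real.sqrt x))) ∧
    ¬ MemB 1 (fun x : ℝ => 1 / (Real.sqrt x + 1) ^ 3) := by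
  refine ⟨aux_part1, aux_part2, ?_⟩
  rintro ⟨hsm, p, hp, hks, i, hi, c, hc0, hexp⟩
  have hev : p 1 =ᶠ[atTop] (fun x : ℝ => -(2 / 3) * (x + Real.sqrt x)) := by
    filter_upwards [hp, eventually_gt_atTop (0:ℝ)] with x hfx hx
    have hd := aux_deriv_f_ne hx
    have hfx' : (1 / (Real.sqrt x + 1) ^ 3)
        = p 1 x * deriv (fun t : ℝ => 1 / (Real.sqrt t + 1) ^ 3) x := by
      simpa [Finset.Icc_self, iteratedDeriv_one] using hfx
    have hpx : p 1 x = (1 / (Real.sqrt x + 1) ^ 3) /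
        deriv (fun t : ℝ => 1 / (Real.sqrt t + 1) ^ 3) x := by
      rw [hfx', mul_div_assoc, div_self hd, mul_one]
    rw [hpx, aux_part1 x hx]
  exact aux_part2 (i : ℝ) ⟨c, aux_hasExpA_congr hev hexp⟩
end
end

section
/- Let f(x) = 1/(√x + 1)³ for x > 0. Then f(x) = f_1(x) + f_2(x) for all x > 1, where f_1(x) = √x·(x + 3)/(x − 1)³ belongs to A^(−3/2) strictly and f_2(x) = −(3x + 1)/(x − 1)³ belongs to A^(−2) strictly; consequently f_1 ∈ B^(1), f_2 ∈ B^(1), and f ∈ B^(2). On the other hand, the composition φ(x) = f(x²) = 1/(x + 1)³ belongs to A^(−3), hence φ ∈ B^(1). Thus the minimal m for which f ∈ B^(m) is not in general preserved under the substitution x ↦ g(x) with g ∈ A^(s) strictly. -/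
open Filter Finset Real

noncomputable section

open Topology ContDiff

lemma contDiffOn_iteratedDeriv_of_isOpen {s : Set ℝ} (hs : IsOpen s) {f : ℝ → ℝ}
    (hf : ContDiffOn ℝ ω f s) (n : ℕ) : ContDiffOn ℝ ω (iteratedDeriv n f) s := by
  induction n with
  | zero => simpa [iteratedDeriv_zero] using hf
  | succ n ih =>
    rw [iteratedDeriv_succ]
    exact ih.deriv_of_isOpen hs (by simp)

lemma differentiableAt_of_contDiffOn {s : Set ℝ} (hs : IsOpen s) {f : ℝ → ℝ}
    (hf : ContDiffOn ℝ ω f s) {x : ℝ} (hx : x ∈ s) : DifferentiableAt ℝ f x :=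
  ((hf.contDiffAt (hs.mem_nhds hx)).differentiableAt (by simp))

/-- The family of rescaled derivative profiles. -/
def Gfam (γ : ℝ) (g : ℝ → ℝ) : ℕ → ℝ → ℝ
  | 0 => g
  | (j+1) => fun t => (γ - j) * Gfam γ g j t - t * deriv (Gfam γ g j) t

lemma Gfam_contDiffOn {r γ : ℝ} {g : ℝ → ℝ} (hg : ContDiffOn ℝ ω g (Set.Ioo (-r) r)) (j : ℕ) :
    ContDiffOn ℝ ω (Gfam γ g j) (Set.Ioo (-r) r) := by
  induction j with
  | zero => exact hg
  | succ j ih =>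
    exact (contDiffOn_const.mul ih).sub
      (contDiffOn_id.mul (ih.deriv_of_isOpen isOpen_Ioo (by simp)))

/-- iterated derivative of `c*φ - t*φ'` on an open set. -/
lemma iteratedDeriv_shift {s : Set ℝ} (hs : IsOpen s) {φ : ℝ → ℝ}
    (hφ : ContDiffOn ℝ ω φ s) (c : ℝ) (i : ℕ) :
    ∀ t ∈ s, iteratedDeriv i (fun u => c * φ u - u * deriv φ u) t
      = c * iteratedDeriv i φ t - (t * iteratedDeriv (i+1) φ t + i * iteratedDeriv i φ t) := by
  induction i with
  | zero =>
    intro t ht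
    simp [iteratedDeriv_zero, iteratedDeriv_one]
  | succ i ih =>
    intro t ht
    rw [iteratedDeriv_succ]
    have heq : (iteratedDeriv i (fun u => c * φ u - u * deriv φ u)) =ᶠ[𝓝 t]
        (fun u => c * iteratedDeriv i φ u - (u * iteratedDeriv (i+1) φ u
          + i * iteratedDeriv i φ u)) := by
      filter_upwards [hs.mem_nhds ht] with u hu using ih u hu
    rw [heq.deriv_eq]
    have d1 : DifferentiableAt ℝ (iteratedDeriv i φ) t :=
      differentiableAt_of_contDiffOn hs (contDiffOn_iteratedDeriv_of_isOpen hs hφ i) ht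
    have d2 : DifferentiableAt ℝ (iteratedDeriv (i+1) φ) t :=
      differentiableAt_of_contDiffOn hs (contDiffOn_iteratedDeriv_of_isOpen hs hφ (i+1)) ht
    have e1 : HasDerivAt (iteratedDeriv i φ) (iteratedDeriv (i+1) φ t) t := by
      simpa [iteratedDeriv_succ] using d1.hasDerivAt
    have e2 : HasDerivAt (iteratedDeriv (i+1) φ) (iteratedDeriv (i+2) φ t) t := by
      simpa [iteratedDeriv_succ] using d2.hasDerivAt
    have h1 := ((e1.const_mul c).sub (((hasDerivAt_id t).mul e2).add (e1.const_mul (i:ℝ))))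
    simp only [id_eq] at h1
    rw [(show HasDerivAt (fun u => c * iteratedDeriv i φ u - (u * iteratedDeriv (i + 1) φ u + (i:ℝ) * iteratedDeriv i φ u)) _ t from h1).deriv]
    have : iteratedDeriv (i+1+1) φ t = iteratedDeriv (i+2) φ t := by norm_num
    rw [this]
    push_cast
    simp only [id_eq, one_mul]
    ring

lemma Gfam_coeff {r γ : ℝ} (hr : 0 < r) {g : ℝ → ℝ}
    (hg : ContDiffOn ℝ ω g (Set.Ioo (-r) r)) (j i : ℕ) :
    iteratedDeriv i (Gfam γ g j) 0
      = iteratedDeriv i g 0 * ∏ l ∈ Finset.range j, (γ - (i:ℝ) - (l:ℝ)) := by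
  induction j with
  | zero => simp [Gfam]
  | succ j ih =>
    have h0 : (0:ℝ) ∈ Set.Ioo (-r) r := ⟨by linarith, hr⟩
    have := iteratedDeriv_shift isOpen_Ioo (Gfam_contDiffOn (γ := γ) hg j) (γ - (j:ℝ)) i 0 h0
    rw [show (Gfam γ g (j+1)) = (fun u => (γ - (j:ℝ)) * Gfam γ g j u - u * deriv (Gfam γ g j) u)
      from rfl, this, ih, Finset.prod_range_succ]
    ring

lemma Gfam_iteratedDeriv {r γ a : ℝ} (hr : 0 < r) (ha : 1/r < a) (ha0 : 0 < a)
    {g : ℝ → ℝ} (hg : ContDiffOn ℝ ω g (Set.Ioo (-r) r)) (j : ℕ) :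
    ∀ x, a < x → iteratedDeriv j (fun y => y ^ γ * g (1/y)) x
      = x ^ (γ - (j:ℝ)) * Gfam γ g j (1/x) := by
  have hmem : ∀ x : ℝ, a < x → 1/x ∈ Set.Ioo (-r) r := by
    intro x hx
    have hx0 : 0 < x := lt_trans ha0 hx
    have h1 : 0 < 1/x := by positivity
    refine ⟨by linarith, ?_⟩
    rw [div_lt_iff₀ hx0]
    have : 1/r < x := lt_trans ha hx
    rw [div_lt_iff₀ hr] at this
    linarith [this]
  induction j with
  | zero => intro x hx; simp [iteratedDeriv_zero, Gfam]
  | succ j ih =>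
    intro x hx
    have hx0 : 0 < x := lt_trans ha0 hx
    rw [iteratedDeriv_succ]
    have heq : iteratedDeriv j (fun y => y ^ γ * g (1/y)) =ᶠ[𝓝 x]
        (fun y => y ^ (γ - (j:ℝ)) * Gfam γ g j (1/y)) := by
      filter_upwards [isOpen_Ioi.mem_nhds (Set.mem_Ioi.2 hx)] with y hy using ih y hy
    rw [heq.deriv_eq]
    have h1 : HasDerivAt (fun y : ℝ => y ^ (γ - (j:ℝ)))
        ((γ - (j:ℝ)) * x ^ (γ - (j:ℝ) - 1)) x :=
      Real.hasDerivAt_rpow_const (Or.inl hx0.ne')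
    have h2 : HasDerivAt (fun y : ℝ => Gfam γ g j (1/y))
        (deriv (Gfam γ g j) (1/x) * (-(x^2)⁻¹)) x := by
      have hout : HasDerivAt (Gfam γ g j) (deriv (Gfam γ g j) (1/x)) (1/x) :=
        (differentiableAt_of_contDiffOn isOpen_Ioo (Gfam_contDiffOn (γ := γ) hg j)
          (hmem x hx)).hasDerivAt
      have hin : HasDerivAt (fun y : ℝ => 1/y) (-(x^2)⁻¹) x := by
        simpa [one_div] using hasDerivAt_inv hx0.ne'
      exact hout.comp x hin
    rw [(show HasDerivAt (fun y => y ^ (γ - (j:ℝ)) * Gfam γ g j (1 / y)) _ x from h1.mul h2).deriv]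
    rw [show Gfam γ g (j+1) = fun t => (γ - (j:ℝ)) * Gfam γ g j t - t * deriv (Gfam γ g j) t
      from rfl]
    push_cast
    show _ = x ^ (γ - ((j:ℝ)+1)) * ((γ - (j:ℝ)) * Gfam γ g j (1/x)
      - (1/x) * deriv (Gfam γ g j) (1/x))
    have e1 : x ^ (γ - (j:ℝ) - 1) = x ^ (γ - ((j:ℝ)+1)) := by ring_nf
    have e2 : x ^ (γ - (j:ℝ)) = x ^ (γ - ((j:ℝ)+1)) * x := by
      rw [← Real.rpow_add_one hx0.ne']; ring_nf
    rw [e1, e2]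
    field_simp
    ring

lemma taylor_bound {r : ℝ} (hr : 0 < r) (N : ℕ) :
    ∀ h : ℝ → ℝ, ContDiffOn ℝ ω h (Set.Ioo (-r) r) →
    ∃ C : ℝ, 0 ≤ C ∧ ∀ t ∈ Set.Icc (0:ℝ) (r/2),
      |h t - ∑ i ∈ Finset.range N, (iteratedDeriv i h 0 / (i.factorial : ℝ)) * t ^ i|
        ≤ C * t ^ N := by
  have hsub : Set.Icc (0:ℝ) (r/2) ⊆ Set.Ioo (-r) r := by
    intro t ht
    exact ⟨by linarith [ht.1], by linarith [ht.2]⟩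
  induction N with
  | zero =>
    intro h hh
    have hcont : ContinuousOn h (Set.Icc (0:ℝ) (r/2)) :=
      (hh.continuousOn).mono hsub
    obtain ⟨C, hC⟩ := (isCompact_Icc).exists_bound_of_continuousOn hcont
    refine ⟨max C 0, le_max_right _ _, fun t ht => ?_⟩
    simp only [Finset.range_zero, Finset.sum_empty, sub_zero, pow_zero, mul_one]
    exact le_trans (hC t ht) (le_max_left _ _)
  | succ N ih =>
    intro h hh
    obtain ⟨C, hC0, hC⟩ := ih (deriv h) (hh.deriv_of_isOpen isOpen_Ioo (by simp))
    refine ⟨C, hC0, fun t ht => ?_⟩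
    set a : ℕ → ℝ := fun i => iteratedDeriv i h 0 / (i.factorial : ℝ) with ha
    set E : ℝ → ℝ := fun u => h u - ∑ i ∈ Finset.range (N+1), a i * u ^ i with hE
    have hderivE : ∀ u ∈ Set.Icc (0:ℝ) (r/2), HasDerivAt E
        (deriv h u - ∑ i ∈ Finset.range N,
          (iteratedDeriv i (deriv h) 0 / (i.factorial : ℝ)) * u ^ i) u := by
      intro u hu
      have hd : HasDerivAt h (deriv h u) u :=
        (differentiableAt_of_contDiffOn isOpen_Ioo hh (hsub hu)).hasDerivAt
      have hp : HasDerivAt (fun v : ℝ => ∑ i ∈ Finset.range (N+1), a i * v ^ i)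
          (∑ i ∈ Finset.range (N+1), a i * ((i:ℝ) * u ^ (i-1))) u :=
        HasDerivAt.fun_sum (fun i _ => (hasDerivAt_pow i u).const_mul (a i))
      have hsum : ∑ i ∈ Finset.range (N+1), a i * ((i:ℝ) * u ^ (i-1))
          = ∑ i ∈ Finset.range N,
            (iteratedDeriv i (deriv h) 0 / (i.factorial : ℝ)) * u ^ i := by
        rw [Finset.sum_range_succ']
        simp only [Nat.cast_zero, zero_mul, mul_zero, add_zero]
        refine Finset.sum_congr rfl (fun i _ => ?_)
        have : iteratedDeriv i (deriv h) 0 = iteratedDeriv (i+1) h 0 := by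
          rw [iteratedDeriv_succ']
        rw [this, ha]
        simp only [Nat.add_sub_cancel]
        rw [Nat.factorial_succ]
        push_cast
        field_simp
      rw [← hsum]
      exact hd.sub hp
    have hbound : ∀ u ∈ Set.Icc (0:ℝ) t, ‖deriv h u - ∑ i ∈ Finset.range N,
        (iteratedDeriv i (deriv h) 0 / (i.factorial : ℝ)) * u ^ i‖ ≤ C * t ^ N := by
      intro u hu
      have hu' : u ∈ Set.Icc (0:ℝ) (r/2) := ⟨hu.1, le_trans hu.2 ht.2⟩
      refine le_trans (hC u hu') ?_
      exact mul_le_mul_of_nonneg_left (pow_le_pow_left₀ hu.1 hu.2 N) hC0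
    have hmvt := Convex.norm_image_sub_le_of_norm_hasDerivWithin_le
      (fun u hu => (hderivE u ⟨hu.1, le_trans hu.2 ht.2⟩).hasDerivWithinAt)
      hbound (convex_Icc 0 t) (Set.left_mem_Icc.2 ht.1) (Set.right_mem_Icc.2 ht.1)
    have hE0 : E 0 = 0 := by
      rw [hE]
      simp only [Finset.sum_range_succ']
      simp [ha, iteratedDeriv_zero]
    calc |E t| = ‖E t - E 0‖ := by rw [hE0, sub_zero]; rfl
    _ ≤ C * t ^ N * ‖t - 0‖ := hmvt
    _ = C * t ^ (N+1) := by
        rw [sub_zero, Real.norm_eq_abs, abs_of_nonneg ht.1]; ring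

lemma hasExpA_main {γ r a : ℝ} {g α : ℝ → ℝ} (hr : 0 < r) (ha : 1/r < a) (ha0 : 0 < a)
    (hg : ContDiffOn ℝ ω g (Set.Ioo (-r) r))
    (hα : ∀ x, a < x → α x = x ^ γ * g (1/x)) :
    HasExpA γ (fun i => iteratedDeriv i g 0 / (i.factorial : ℝ)) α := by
  have hmem : ∀ x : ℝ, a < x → 1/x ∈ Set.Ioo (-r) r := by
    intro x hx
    have hx0 : 0 < x := lt_trans ha0 hx
    have h1 : 0 < 1/x := by positivity
    refine ⟨by linarith, ?_⟩
    rw [div_lt_iff₀ hx0]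
    have : 1/r < x := lt_trans ha hx
    rw [div_lt_iff₀ hr] at this
    linarith [this]
  have hαeq : ∀ x, a < x → α x = (fun y => y ^ γ * g (1/y)) x := hα
  constructor
  · refine ⟨a, ha0, fun x hx => ?_⟩
    have hx : a < x := hx
    have hx0 : 0 < x := lt_trans ha0 hx
    have hA : ContDiffAt ℝ ω (fun y : ℝ => y ^ γ * g (1/y)) x := by
      refine ContDiffAt.mul (Real.contDiffAt_rpow_const_of_ne hx0.ne') ?_
      have houter : ContDiffAt ℝ ω g (1/x) :=
        hg.contDiffAt (isOpen_Ioo.mem_nhds (hmem x hx))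
      have hinner : ContDiffAt ℝ ω (fun y : ℝ => 1/y) x := by
        simpa [one_div] using contDiffAt_inv (𝕜 := ℝ) hx0.ne' (n := ω)
      exact houter.comp x hinner
    refine (hA.of_le le_top).congr_of_eventuallyEq ?_
    filter_upwards [isOpen_Ioi.mem_nhds (Set.mem_Ioi.2 hx)] with y hy using hαeq y hy
  · intro j N
    obtain ⟨C, hC0, hC⟩ := taylor_bound hr N (Gfam γ g j) (Gfam_contDiffOn hg j)
    rw [Asymptotics.isBigO_iff]
    refine ⟨C, ?_⟩
    have hev : ∀ᶠ x : ℝ in atTop, max a (2/r) < x := eventually_gt_atTop _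
    filter_upwards [hev] with x hx
    have hxa : a < x := lt_of_le_of_lt (le_max_left _ _) hx
    have hx0 : 0 < x := lt_trans ha0 hxa
    have hxr : 2/r < x := lt_of_le_of_lt (le_max_right _ _) hx
    have ht : 1/x ∈ Set.Icc (0:ℝ) (r/2) := by
      constructor
      · positivity
      · rw [div_le_iff₀ hx0]
        rw [div_lt_iff₀ hr] at hxr
        nlinarith
    -- rewrite iterated deriv
    have hid : iteratedDeriv j α x = x ^ (γ - (j:ℝ)) * Gfam γ g j (1/x) := by
      have heq : α =ᶠ[𝓝 x] (fun y => y ^ γ * g (1/y)) := by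
        filter_upwards [isOpen_Ioi.mem_nhds (Set.mem_Ioi.2 hxa)] with y hy using hαeq y hy
      rw [heq.iteratedDeriv_eq j]
      exact Gfam_iteratedDeriv hr ha ha0 hg j x hxa
    have hterm : ∀ i : ℕ,
        (iteratedDeriv i g 0 / (i.factorial : ℝ)) * (∏ l ∈ Finset.range j, (γ - (i:ℝ) - (l:ℝ)))
          * x ^ (γ - (i:ℝ) - (j:ℝ))
        = x ^ (γ - (j:ℝ)) * ((iteratedDeriv i (Gfam γ g j) 0 / (i.factorial : ℝ)) * (1/x) ^ i) := by
      intro i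
      rw [Gfam_coeff hr hg j i]
      have : x ^ (γ - (i:ℝ) - (j:ℝ)) = x ^ (γ - (j:ℝ)) * (1/x) ^ i := by
        rw [show γ - (i:ℝ) - (j:ℝ) = (γ - (j:ℝ)) + (-(i:ℝ)) by ring, Real.rpow_add hx0,
          Real.rpow_neg hx0.le, Real.rpow_natCast]
        rw [one_div, inv_pow]
      rw [this]
      ring
    have hsum : ∑ i ∈ Finset.range N,
        (iteratedDeriv i g 0 / (i.factorial : ℝ)) * (∏ l ∈ Finset.range j, (γ - (i:ℝ) - (l:ℝ)))
          * x ^ (γ - (i:ℝ) - (j:ℝ))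
        = x ^ (γ - (j:ℝ)) * ∑ i ∈ Finset.range N,
            (iteratedDeriv i (Gfam γ g j) 0 / (i.factorial : ℝ)) * (1/x) ^ i := by
      rw [Finset.mul_sum]
      exact Finset.sum_congr rfl (fun i _ => hterm i)
    rw [hid, hsum, ← mul_sub]
    rw [Real.norm_eq_abs, Real.norm_eq_abs, abs_mul,
      abs_of_nonneg (Real.rpow_nonneg hx0.le _)]
    have hT := hC (1/x) ht
    calc x ^ (γ - (j:ℝ)) * |Gfam γ g j (1/x) - ∑ i ∈ Finset.range N,
          (iteratedDeriv i (Gfam γ g j) 0 / (i.factorial : ℝ)) * (1/x) ^ i|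
        ≤ x ^ (γ - (j:ℝ)) * (C * (1/x) ^ N) := by
          exact mul_le_mul_of_nonneg_left hT (Real.rpow_nonneg hx0.le _)
    _ = C * |x ^ (γ - (N:ℝ) - (j:ℝ))| := by
        have : x ^ (γ - (N:ℝ) - (j:ℝ)) = x ^ (γ - (j:ℝ)) * (1/x) ^ N := by
          rw [show γ - (N:ℝ) - (j:ℝ) = (γ - (j:ℝ)) + (-(N:ℝ)) by ring, Real.rpow_add hx0,
            Real.rpow_neg hx0.le, Real.rpow_natCast, one_div, inv_pow]
        rw [this, abs_of_nonneg (by positivity)]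
        ring

lemma memAS_main {γ r a : ℝ} {g α : ℝ → ℝ} (hr : 0 < r) (ha : 1/r < a) (ha0 : 0 < a)
    (hg : ContDiffOn ℝ ω g (Set.Ioo (-r) r)) (hg0 : g 0 ≠ 0)
    (hα : ∀ x, a < x → α x = x ^ γ * g (1/x)) : MemAS γ α := by
  refine ⟨fun i => iteratedDeriv i g 0 / (i.factorial : ℝ), ?_,
    hasExpA_main hr ha ha0 hg hα⟩
  simpa [iteratedDeriv_zero] using hg0

lemma memAS_f1 : MemAS (-(3:ℝ)/2) (fun x : ℝ => Real.sqrt x * (x + 3) / (x - 1) ^ 3) := by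
  apply memAS_main (r := 1/10) (a := 11) (g := fun t => (1+3*t)/(1-t)^3)
    (by norm_num) (by norm_num) (by norm_num)
  · apply ContDiffOn.div
    · exact (contDiff_const.add (contDiff_const.mul contDiff_id)).contDiffOn
    · exact ((contDiff_const.sub contDiff_id).pow 3).contDiffOn
    · intro t ht
      have h : (0:ℝ) < 1 - t := by linarith [ht.2]
      positivity
  · norm_num
  · intro x hx
    have hx0 : (0:ℝ) < x := by linarith
    have hs : Real.sqrt x * Real.sqrt x = x := Real.mul_self_sqrt hx0.le
    have e : x ^ (-(3:ℝ)/2) = Real.sqrt x * (x^2)⁻¹ := by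
      rw [show (-(3:ℝ)/2) = (1/2 : ℝ) + (-2 : ℝ) by norm_num, Real.rpow_add hx0,
        ← Real.sqrt_eq_rpow, show ((-2:ℝ)) = ((-2:ℤ):ℝ) by norm_num, Real.rpow_intCast,
        zpow_neg]
      norm_num
    rw [e]
    have h1 : x - 1 ≠ 0 := by linarith
    have h2 : (1:ℝ) - 1/x ≠ 0 := by
      have : 1/x < 1 := by rw [div_lt_one hx0]; linarith
      linarith
    field_simp

lemma rpow_neg_nat' (x : ℝ) (hx : 0 < x) (n : ℕ) : x ^ (-(n:ℝ)) = (x^n)⁻¹ := by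
  rw [Real.rpow_neg hx.le, Real.rpow_natCast]

lemma memAS_f2 : MemAS (-2 : ℝ) (fun x : ℝ => -(3 * x + 1) / (x - 1) ^ 3) := by
  apply memAS_main (r := 1/10) (a := 11) (g := fun t => -(3+t)/(1-t)^3)
    (by norm_num) (by norm_num) (by norm_num)
  · apply ContDiffOn.div
    · exact ((contDiff_const.add contDiff_id).neg).contDiffOn
    · exact ((contDiff_const.sub contDiff_id).pow 3).contDiffOn
    · intro t ht
      have h : (0:ℝ) < 1 - t := by linarith [ht.2]
      positivity
  · norm_num
  · intro x hx
    have hx0 : (0:ℝ) < x := by linarith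
    have e : x ^ (-2:ℝ) = (x^2)⁻¹ := by
      rw [show (-2:ℝ) = -((2:ℕ):ℝ) by norm_num, rpow_neg_nat' x hx0]
    rw [e]
    have h1 : x - 1 ≠ 0 := by linarith
    have h2 : (1:ℝ) - 1/x ≠ 0 := by
      have : 1/x < 1 := by rw [div_lt_one hx0]; linarith
      linarith
    field_simp

lemma memAS_phi : MemAS (-3 : ℝ) (fun x : ℝ => 1 / (x + 1) ^ 3) := by
  apply memAS_main (r := 1/10) (a := 11) (g := fun t => 1/(1+t)^3)
    (by norm_num) (by norm_num) (by norm_num)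
  · apply ContDiffOn.div
    · exact contDiff_const.contDiffOn
    · exact ((contDiff_const.add contDiff_id).pow 3).contDiffOn
    · intro t ht
      have h : (0:ℝ) < 1 + t := by linarith [ht.1]
      positivity
  · norm_num
  · intro x hx
    have hx0 : (0:ℝ) < x := by linarith
    have e : x ^ (-3:ℝ) = (x^3)⁻¹ := by
      rw [show (-3:ℝ) = -((3:ℕ):ℝ) by norm_num, rpow_neg_nat' x hx0]
    rw [e]
    have h1 : x + 1 ≠ 0 := by linarith
    have h2 : (1:ℝ) + 1/x ≠ 0 := by positivity
    field_simp

lemma memAS_p_f1 : MemAS ((1:ℤ) : ℝ)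
    (fun x : ℝ => -2*x*(x+3)*(x-1)/(3*(x^2+6*x+1))) := by
  apply memAS_main (r := 1/10) (a := 11)
    (g := fun t => -2*(1+3*t)*(1-t)/(3*(1+6*t+t^2)))
    (by norm_num) (by norm_num) (by norm_num)
  · apply ContDiffOn.div
    · exact ((contDiff_const.mul (contDiff_const.add (contDiff_const.mul contDiff_id))).mul
        (contDiff_const.sub contDiff_id)).contDiffOn
    · exact (contDiff_const.mul ((contDiff_const.add (contDiff_const.mul contDiff_id)).add
        (contDiff_id.pow 2))).contDiffOn
    · intro t ht
      have h1 := ht.1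
      have h2 := ht.2
      have h : (0:ℝ) < 1 + 6*t + t^2 := by nlinarith
      intro hc
      rw [show (3:ℝ)*(1+6*t+t^2) = 0 ↔ (1+6*t+t^2) = 0 by constructor <;> intro h' <;>
        nlinarith] at hc
      nlinarith
  · norm_num
  · intro x hx
    have hx0 : (0:ℝ) < x := by linarith
    rw [show (((1:ℤ)):ℝ) = (1:ℝ) by norm_num, Real.rpow_one]
    have h1 : x^2 + 6*x + 1 ≠ 0 := by nlinarith
    have h2 : (1:ℝ) + 6*(1/x) + (1/x)^2 ≠ 0 := by positivity
    field_simp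

lemma memAS_p_f2 : MemAS ((1:ℤ) : ℝ)
    (fun x : ℝ => -(3*x+1)*(x-1)/(6*(x+1))) := by
  apply memAS_main (r := 1/10) (a := 11)
    (g := fun t => -(3+t)*(1-t)/(6*(1+t)))
    (by norm_num) (by norm_num) (by norm_num)
  · apply ContDiffOn.div
    · exact (((contDiff_const.add contDiff_id).neg).mul
        (contDiff_const.sub contDiff_id)).contDiffOn
    · exact (contDiff_const.mul (contDiff_const.add contDiff_id)).contDiffOn
    · intro t ht
      have h : (0:ℝ) < 1 + t := by linarith [ht.1]
      positivity
  · norm_num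
  · intro x hx
    have hx0 : (0:ℝ) < x := by linarith
    rw [show (((1:ℤ)):ℝ) = (1:ℝ) by norm_num, Real.rpow_one]
    have h1 : x + 1 ≠ 0 := by linarith
    have h2 : (1:ℝ) + 1/x ≠ 0 := by positivity
    field_simp

lemma memAS_p_phi : MemAS ((1:ℤ) : ℝ) (fun x : ℝ => -(x+1)/3) := by
  apply memAS_main (r := 1/10) (a := 11) (g := fun t => -(1+t)/3)
    (by norm_num) (by norm_num) (by norm_num)
  · exact (((contDiff_const.add contDiff_id).neg).div_const 3).contDiffOn
  · norm_num
  · intro x hx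
    have hx0 : (0:ℝ) < x := by linarith
    rw [show (((1:ℤ)):ℝ) = (1:ℝ) by norm_num, Real.rpow_one]
    field_simp

lemma memAS_p1_f : MemAS ((1:ℤ) : ℝ) (fun x : ℝ => (1-9*x)/6) := by
  apply memAS_main (r := 1/10) (a := 11) (g := fun t => (t-9)/6)
    (by norm_num) (by norm_num) (by norm_num)
  · exact ((contDiff_id.sub contDiff_const).div_const 6).contDiffOn
  · norm_num
  · intro x hx
    have hx0 : (0:ℝ) < x := by linarith
    rw [show (((1:ℤ)):ℝ) = (1:ℝ) by norm_num, Real.rpow_one]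
    field_simp

lemma memAS_p2_f : MemAS ((2:ℤ) : ℝ) (fun x : ℝ => (x-x^2)/3) := by
  apply memAS_main (r := 1/10) (a := 11) (g := fun t => (t-1)/3)
    (by norm_num) (by norm_num) (by norm_num)
  · exact ((contDiff_id.sub contDiff_const).div_const 3).contDiffOn
  · norm_num
  · intro x hx
    have hx0 : (0:ℝ) < x := by linarith
    rw [show (((2:ℤ)):ℝ) = ((2:ℕ):ℝ) by norm_num, Real.rpow_natCast]
    field_simp

lemma memB_one {f p : ℝ → ℝ} (hsmooth : ∀ᶠ x in atTop, ContDiffAt ℝ (⊤ : ℕ∞) f x)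
    (hid : ∀ᶠ x in atTop, f x = p x * deriv f x)
    (i : ℤ) (hi : i ≤ 1) (hp : MemAS (i : ℝ) p) : MemB 1 f := by
  refine ⟨hsmooth, fun _ => p, ?_, ?_, ⟨i, by exact_mod_cast hi, hp⟩⟩
  · filter_upwards [hid] with x hx
    simpa [Finset.Icc_self, iteratedDeriv_one] using hx
  · intro k hk
    simp at hk

lemma memB_two {f p1 p2 : ℝ → ℝ} (hsmooth : ∀ᶠ x in atTop, ContDiffAt ℝ (⊤ : ℕ∞) f x)
    (hid : ∀ᶠ x in atTop, f x = p1 x * deriv f x + p2 x * deriv (deriv f) x)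
    (i1 : ℤ) (hi1 : i1 ≤ 1) (hp1 : MemAS (i1 : ℝ) p1)
    (i2 : ℤ) (hi2 : i2 ≤ 2) (hp2 : MemAS (i2 : ℝ) p2) : MemB 2 f := by
  refine ⟨hsmooth, fun k => if k = 1 then p1 else p2, ?_, ?_, ?_⟩
  · filter_upwards [hid] with x hx
    have h2 : Finset.Icc 1 2 = ({1, 2} : Finset ℕ) := rfl
    rw [h2, Finset.sum_insert (by norm_num), Finset.sum_singleton]
    simp only [if_pos rfl, if_neg (by norm_num : (2:ℕ) ≠ 1)]
    rw [iteratedDeriv_one, show iteratedDeriv 2 f = deriv (deriv f) by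
      rw [show (2:ℕ) = 1 + 1 from rfl, iteratedDeriv_succ, iteratedDeriv_one]]
    exact hx
  · intro k hk
    simp only [Nat.add_sub_cancel, Finset.mem_Icc] at hk
    have : k = 1 := le_antisymm hk.2 hk.1
    subst this
    exact Or.inr ⟨i1, by exact_mod_cast hi1, by simpa using hp1⟩
  · exact ⟨i2, by exact_mod_cast hi2, by simp only [if_neg (by norm_num : (2:ℕ) ≠ 1)]; exact hp2⟩

lemma sqrt_gt_one {x : ℝ} (hx : 1 < x) : 1 < Real.sqrt x := by
  rw [show (1:ℝ) = Real.sqrt 1 by simp]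
  exact Real.sqrt_lt_sqrt (by norm_num) hx

lemma hasDerivAt_f1 {x : ℝ} (hx : 1 < x) :
    HasDerivAt (fun x : ℝ => Real.sqrt x * (x + 3) / (x - 1) ^ 3)
      ((3*(-(x^2)-6*x-1))/(2*Real.sqrt x*(x-1)^4)) x := by
  have hx0 : (0:ℝ) < x := by linarith
  have hs1 : 1 < Real.sqrt x := sqrt_gt_one hx
  have hsne : Real.sqrt x ≠ 0 := by linarith
  have hden : ((x:ℝ) - 1) ^ 3 ≠ 0 := by
    have : (0:ℝ) < x - 1 := by linarith
    positivity
  have h1 : HasDerivAt (fun y : ℝ => Real.sqrt y * (y + 3))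
      (1/(2*Real.sqrt x) * (x + 3) + Real.sqrt x * 1) x :=
    (Real.hasDerivAt_sqrt hx0.ne').mul ((hasDerivAt_id x).add_const 3)
  have h2 : HasDerivAt (fun y : ℝ => (y - 1) ^ 3)
      ((3:ℕ) * (x - 1) ^ 2 * 1) x := by
    simpa using (((hasDerivAt_id x).sub_const 1).fun_pow 3)
  have hD := h1.fun_div h2 hden
  refine hD.congr_deriv ?_
  symm
  have hs : Real.sqrt x * Real.sqrt x = x := Real.mul_self_sqrt hx0.le
  have hd1 : 2 * Real.sqrt x * (x-1)^4 ≠ 0 := by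
    have h4 : (0:ℝ) < x - 1 := by linarith
    positivity
  have hd2 : (((x:ℝ)-1)^3)^2 ≠ 0 := pow_ne_zero 2 hden
  rw [div_eq_div_iff hd1 hd2]
  push_cast
  generalize hsx : Real.sqrt x = s at *
  rw [← hs]
  field_simp
  ring

lemma memB_f1 : MemB 1 (fun x : ℝ => Real.sqrt x * (x + 3) / (x - 1) ^ 3) := by
  have hsm : ∀ᶠ x : ℝ in atTop, ContDiffAt ℝ (⊤ : ℕ∞) (fun x : ℝ => Real.sqrt x * (x + 3) / (x - 1) ^ 3) x := by
    filter_upwards [eventually_gt_atTop 1] with x hx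
    have hx0 : (0:ℝ) < x := by linarith
    refine ContDiffAt.div ?_ ?_ (pow_ne_zero 3 (sub_ne_zero.2 (ne_of_gt hx)))
    · exact (contDiffAt_sqrt hx0.ne').mul (contDiffAt_id.add contDiffAt_const)
    · exact (contDiffAt_id.sub contDiffAt_const).pow 3
  apply memB_one hsm ?_ 1 (le_refl 1) memAS_p_f1
  filter_upwards [eventually_gt_atTop 1] with x hx
  rw [(hasDerivAt_f1 hx).deriv]
  have hx0 : (0:ℝ) < x := by linarith
  have hs : Real.sqrt x * Real.sqrt x = x := Real.mul_self_sqrt hx0.le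
  have hs1 : 1 < Real.sqrt x := sqrt_gt_one hx
  show Real.sqrt x * (x + 3) / (x - 1) ^ 3 = -2*x*(x+3)*(x-1)/(3*(x^2+6*x+1))
    * ((3*(-(x^2)-6*x-1))/(2*Real.sqrt x*(x-1)^4))
  generalize hsx : Real.sqrt x = s at *
  rw [← hs]
  have h1 : s ≠ 0 := by linarith
  have h2 : s*s - 1 ≠ 0 := by nlinarith
  have h3 : (s*s)^2 + 6*(s*s) + 1 ≠ 0 := by nlinarith
  field_simp
  ring


lemma hasDerivAt_f2 {x : ℝ} (hx : 1 < x) :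
    HasDerivAt (fun x : ℝ => -(3 * x + 1) / (x - 1) ^ 3) (6*(x+1)/(x-1)^4) x := by
  have hden : ((x:ℝ) - 1) ^ 3 ≠ 0 := pow_ne_zero 3 (sub_ne_zero.2 (ne_of_gt hx))
  have h1 : HasDerivAt (fun y : ℝ => -(3 * y + 1)) (-3) x := by
    simpa using (((hasDerivAt_id x).const_mul 3).add_const 1).fun_neg
  have h2 : HasDerivAt (fun y : ℝ => (y - 1) ^ 3) ((3:ℕ) * (x - 1) ^ 2 * 1) x := by
    simpa using (((hasDerivAt_id x).sub_const 1).fun_pow 3)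
  have hD := h1.fun_div h2 hden
  refine hD.congr_deriv ?_
  symm
  have h4 : x - 1 ≠ 0 := sub_ne_zero.2 (ne_of_gt hx)
  field_simp
  ring

lemma memB_f2 : MemB 1 (fun x : ℝ => -(3 * x + 1) / (x - 1) ^ 3) := by
  have hsm : ∀ᶠ x : ℝ in atTop, ContDiffAt ℝ (⊤ : ℕ∞) (fun x : ℝ => -(3 * x + 1) / (x - 1) ^ 3) x := by
    filter_upwards [eventually_gt_atTop 1] with x hx
    refine ContDiffAt.div ?_ ?_ (pow_ne_zero 3 (sub_ne_zero.2 (ne_of_gt hx)))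
    · exact ((contDiffAt_const.mul contDiffAt_id).add contDiffAt_const).neg
    · exact (contDiffAt_id.sub contDiffAt_const).pow 3
  apply memB_one hsm ?_ 1 (le_refl 1) memAS_p_f2
  filter_upwards [eventually_gt_atTop 1] with x hx
  rw [(hasDerivAt_f2 hx).deriv]
  show -(3 * x + 1) / (x - 1) ^ 3 = -(3*x+1)*(x-1)/(6*(x+1)) * (6*(x+1)/(x-1)^4)
  have h1 : x - 1 ≠ 0 := sub_ne_zero.2 (ne_of_gt hx)
  have h2 : x + 1 ≠ 0 := by positivity
  field_simp

lemma hasDerivAt_phi {x : ℝ} (hx : 1 < x) :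
    HasDerivAt (fun x : ℝ => 1 / (x + 1) ^ 3) (-3/(x+1)^4) x := by
  have h2 : x + 1 ≠ 0 := by positivity
  have hden : ((x:ℝ) + 1) ^ 3 ≠ 0 := pow_ne_zero 3 h2
  have h1 : HasDerivAt (fun y : ℝ => (y + 1) ^ 3) ((3:ℕ) * (x + 1) ^ 2 * 1) x := by
    simpa using (((hasDerivAt_id x).add_const 1).fun_pow 3)
  have hD := (hasDerivAt_const x (1:ℝ)).fun_div h1 hden
  refine hD.congr_deriv ?_
  symm
  field_simp
  ring

lemma memB_phi : MemB 1 (fun x : ℝ => 1 / (x + 1) ^ 3) := by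
  have hsm : ∀ᶠ x : ℝ in atTop, ContDiffAt ℝ (⊤ : ℕ∞) (fun x : ℝ => 1 / (x + 1) ^ 3) x := by
    filter_upwards [eventually_gt_atTop 1] with x hx
    have h2 : x + 1 ≠ 0 := by positivity
    exact ContDiffAt.div contDiffAt_const ((contDiffAt_id.add contDiffAt_const).pow 3)
      (pow_ne_zero 3 h2)
  apply memB_one hsm ?_ 1 (le_refl 1) memAS_p_phi
  filter_upwards [eventually_gt_atTop 1] with x hx
  rw [(hasDerivAt_phi hx).deriv]
  show 1 / (x + 1) ^ 3 = -(x+1)/3 * (-3/(x+1)^4)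
  have h2 : x + 1 ≠ 0 := by positivity
  field_simp

lemma hasDerivAt_f {x : ℝ} (hx : 1 < x) :
    HasDerivAt (fun x : ℝ => 1 / (Real.sqrt x + 1) ^ 3)
      (-3/(2*Real.sqrt x*(Real.sqrt x+1)^4)) x := by
  have hx0 : (0:ℝ) < x := by linarith
  have hs1 : 1 < Real.sqrt x := sqrt_gt_one hx
  have hs : Real.sqrt x * Real.sqrt x = x := Real.mul_self_sqrt hx0.le
  have hden : (Real.sqrt x + 1) ^ 3 ≠ 0 := by positivity
  have h1 : HasDerivAt (fun y : ℝ => (Real.sqrt y + 1) ^ 3)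
      ((3:ℕ) * (Real.sqrt x + 1) ^ 2 * (1/(2*Real.sqrt x))) x :=
    ((Real.hasDerivAt_sqrt hx0.ne').add_const 1).pow 3
  have hD := (hasDerivAt_const x (1:ℝ)).fun_div h1 hden
  refine hD.congr_deriv ?_
  symm
  push_cast
  generalize hsx : Real.sqrt x = s at *
  have h1' : s ≠ 0 := by linarith
  have h2' : s + 1 ≠ 0 := by linarith
  field_simp
  ring

lemma hasDerivAt_F1 {x : ℝ} (hx : 1 < x) :
    HasDerivAt (fun x : ℝ => -3/(2*Real.sqrt x*(Real.sqrt x+1)^4))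
      (3*(5*Real.sqrt x+1)/(4*x*Real.sqrt x*(Real.sqrt x+1)^5)) x := by
  have hx0 : (0:ℝ) < x := by linarith
  have hs1 : 1 < Real.sqrt x := sqrt_gt_one hx
  have hs : Real.sqrt x * Real.sqrt x = x := Real.mul_self_sqrt hx0.le
  have hden : 2*Real.sqrt x*(Real.sqrt x+1)^4 ≠ 0 := by positivity
  have h1 : HasDerivAt (fun y : ℝ => 2*Real.sqrt y*(Real.sqrt y+1)^4)
      ((2*(1/(2*Real.sqrt x)))*(Real.sqrt x+1)^4
        + 2*Real.sqrt x*((4:ℕ)*(Real.sqrt x+1)^3*(1/(2*Real.sqrt x)))) x := by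
    exact ((Real.hasDerivAt_sqrt hx0.ne').const_mul 2).mul
      (((Real.hasDerivAt_sqrt hx0.ne').add_const 1).pow 4)
  have hD := (hasDerivAt_const x (-3:ℝ)).fun_div h1 hden
  refine hD.congr_deriv ?_
  symm
  push_cast
  generalize hsx : Real.sqrt x = s at *
  rw [← hs]
  have h1' : s ≠ 0 := by linarith
  have h2' : s + 1 ≠ 0 := by linarith
  field_simp
  ring

lemma memB_f : MemB 2 (fun x : ℝ => 1 / (Real.sqrt x + 1) ^ 3) := by
  have hsm : ∀ᶠ x : ℝ in atTop, ContDiffAt ℝ (⊤ : ℕ∞) (fun x : ℝ => 1 / (Real.sqrt x + 1) ^ 3) x := by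
    filter_upwards [eventually_gt_atTop 1] with x hx
    have hx0 : (0:ℝ) < x := by linarith
    have hs0 : (0:ℝ) ≤ Real.sqrt x := Real.sqrt_nonneg x
    refine ContDiffAt.div contDiffAt_const ?_ (by positivity)
    exact ((contDiffAt_sqrt hx0.ne').add contDiffAt_const).pow 3
  have hder2 : ∀ x : ℝ, 1 < x → deriv (deriv (fun x : ℝ => 1 / (Real.sqrt x + 1) ^ 3)) x
      = 3*(5*Real.sqrt x+1)/(4*x*Real.sqrt x*(Real.sqrt x+1)^5) := by
    intro x hx
    have heq : deriv (fun x : ℝ => 1 / (Real.sqrt x + 1) ^ 3) =ᶠ[𝓝 x]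
        (fun y : ℝ => -3/(2*Real.sqrt y*(Real.sqrt y+1)^4)) := by
      filter_upwards [isOpen_Ioi.mem_nhds (Set.mem_Ioi.2 hx)] with y hy
      exact (hasDerivAt_f hy).deriv
    rw [heq.deriv_eq, (hasDerivAt_F1 hx).deriv]
  apply memB_two hsm ?_ 1 (le_refl 1) memAS_p1_f 2 (le_refl 2) memAS_p2_f
  filter_upwards [eventually_gt_atTop 1] with x hx
  rw [(hasDerivAt_f hx).deriv, hder2 x hx]
  show 1 / (Real.sqrt x + 1) ^ 3
    = (1-9*x)/6 * (-3/(2*Real.sqrt x*(Real.sqrt x+1)^4))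
      + (x-x^2)/3 * (3*(5*Real.sqrt x+1)/(4*x*Real.sqrt x*(Real.sqrt x+1)^5))
  have hx0 : (0:ℝ) < x := by linarith
  have hs1 : 1 < Real.sqrt x := sqrt_gt_one hx
  have hs : Real.sqrt x * Real.sqrt x = x := Real.mul_self_sqrt hx0.le
  generalize hsx : Real.sqrt x = s at *
  rw [← hs]
  have h1' : s ≠ 0 := by linarith
  have h2' : s + 1 ≠ 0 := by linarith
  field_simp
  ring


/-- with `f(x) = 1/(√x+1)³`, one has `f = f₁ + f₂` for `x > 1`, where
`f₁(x) = √x(x+3)/(x−1)³ ∈ A^(−3/2)` strictly and `f₂(x) = −(3x+1)/(x−1)³ ∈ A^(−2)` strictly;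
consequently `f₁ ∈ B^(1)`, `f₂ ∈ B^(1)`, and `f ∈ B^(2)`. On the other hand,
`φ(x) = f(x²) = 1/(x+1)³` (for `x > 0`) belongs to `A^(−3)`, hence `φ ∈ B^(1)`. -/
theorem minimal_order_not_preserved :
    (∀ x : ℝ, 1 < x →
      1 / (Real.sqrt x + 1) ^ 3 =
        Real.sqrt x * (x + 3) / (x - 1) ^ 3 + (-(3 * x + 1) / (x - 1) ^ 3)) ∧
    MemAS (-(3 : ℝ) / 2) (fun x : ℝ => Real.sqrt x * (x + 3) / (x - 1) ^ 3) ∧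
    MemAS (-2) (fun x : ℝ => -(3 * x + 1) / (x - 1) ^ 3) ∧
    MemB 1 (fun x : ℝ => Real.sqrt x * (x + 3) / (x - 1) ^ 3) ∧
    MemB 1 (fun x : ℝ => -(3 * x + 1) / (x - 1) ^ 3) ∧
    MemB 2 (fun x : ℝ => 1 / (Real.sqrt x + 1) ^ 3) ∧
    (∀ x : ℝ, 0 < x → 1 / (Real.sqrt (x ^ 2) + 1) ^ 3 = 1 / (x + 1) ^ 3) ∧
    MemA (-3) (fun x : ℝ => 1 / (x + 1) ^ 3) ∧
    MemB 1 (fun x : ℝ => 1 / (x + 1) ^ 3) := by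
  refine ⟨?_, memAS_f1, memAS_f2, memB_f1, memB_f2, memB_f, ?_, ?_, memB_phi⟩
  · intro x hx
    have hx0 : (0:ℝ) < x := by linarith
    have hs1 : 1 < Real.sqrt x := sqrt_gt_one hx
    have hs : Real.sqrt x * Real.sqrt x = x := Real.mul_self_sqrt hx0.le
    generalize hsx : Real.sqrt x = s at *
    rw [← hs]
    have h1' : s ≠ 0 := by linarith
    have h2' : s + 1 ≠ 0 := by linarith
    have h3' : s*s - 1 ≠ 0 := by nlinarith
    have h4' : s^2 - 1 ≠ 0 := by nlinarith
    field_simp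
    ring
  · intro x hx
    rw [Real.sqrt_sq hx.le]
  · obtain ⟨c, _, h⟩ := memAS_phi
    exact ⟨c, h⟩
end
end
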